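/- Let (G,*) be a groupoid satisfying the identities (x*y)*z = (x*z)*y, w*(x*(y*z)) = w*((x*y)*z), and (w*x)*(y*z) = (w*y)*(x*z). Then for every n ≥ 2, every full linear term over x_1,…,x_n induces the same n-ary operation on G as a term of the form [x_a, x_{b_1}, …, x_{b_{m-1}}] * ⟨x_{b_m}, x_{c_1}, …, x_{c_{n-m-1}}⟩ with b_1 < ⋯ < b_m and c_1 < ⋯ < c_{n-m-1}. Consequently s^ac_n(*) ≤ n(2^{n-1} − 1) and s_n(*) ≤ 2^{n-2}. -/

import Mathlib

/-- Terms (fully parenthesized products) over variables `x_1,…,x_n`. -/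
inductive Term (n : ℕ) : Type
  | var : Fin n → Term n
  | mul : Term n → Term n → Term n

namespace Term

variable {n : ℕ} {G : Type*}

/-- Evaluation of a term in a groupoid `(G, op)` under an assignment `h`. -/
def eval (op : G → G → G) (h : Fin n → G) : Term n → G
  | var i => h i
  | mul s t => op (eval op h s) (eval op h t)

/-- The list of variable indices at the leaves, from left to right. -/
def leaves : Term n → List (Fin n)
  | var i => [i]
  | mul s t => leaves s ++ leaves t

/-- The leftmost variable of a term. -/
def leftVar : Term n → Fin n
  | var i => i
  | mul s _ => leftVar s

/-- The factors `t_1, …, t_m` of the leftmost decomposition `t = [t_0, t_1, …, t_m]`. -/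
def lmFactors : Term n → List (Term n)
  | var _ => []
  | mul s t => lmFactors s ++ [t]

/-- The left depth of the leftmost leaf of a term. -/
def leftDepth : Term n → ℕ
  | var _ => 0
  | mul s _ => leftDepth s + 1

/-- A bracketing of the word `x_1 x_2 ⋯ x_n`. -/
def IsBracketing (t : Term n) : Prop := t.leaves = List.finRange n

/-- A full linear term over `x_1, …, x_n`: each variable occurs exactly once. -/
def IsLinear (t : Term n) : Prop := t.leaves.Perm (List.finRange n)

end Term

/-- Leftmost bracketing `[t_0, t_1, …, t_m]`. -/
def lmBr {n : ℕ} (t0 : Term n) (l : List (Term n)) : Term n := l.foldl Term.mul t0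

/-- Leftmost bracketing of variables `[x_i, x_{j_1}, …, x_{j_k}]`. -/
def lBr {n : ℕ} (i : Fin n) (l : List (Fin n)) : Term n :=
  l.foldl (fun s j => Term.mul s (Term.var j)) (Term.var i)

/-- Rightmost bracketing of variables `⟨x_i, x_{j_1}, …, x_{j_k}⟩`. -/
def rmBr {n : ℕ} (i : Fin n) : List (Fin n) → Term n
  | [] => Term.var i
  | j :: l => Term.mul (Term.var i) (rmBr j l)

/-- `n`-th term of the associative spectrum: the number of distinct `n`-ary operations
induced by bracketings of `x_1 ⋯ x_n`. -/
noncomputable def assocSpec {G : Type*} (op : G → G → G) (n : ℕ) : ℕ :=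
  Set.ncard {f : (Fin n → G) → G | ∃ t : Term n, t.IsBracketing ∧ f = fun h => t.eval op h}

/-- `n`-th term of the ac-spectrum: the number of distinct `n`-ary operations
induced by full linear terms over `x_1, …, x_n`. -/
noncomputable def acSpec {G : Type*} (op : G → G → G) (n : ℕ) : ℕ :=
  Set.ncard {f : (Fin n → G) → G | ∃ t : Term n, t.IsLinear ∧ f = fun h => t.eval op h}
/-- Bell numbers. -/
def bell : ℕ → ℕ
  | 0 => 1
  | n + 1 => ∑ k : Fin (n + 1), Nat.choose n k * bell k
  decreasing_by exact k.isLt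

/-- Ordered Bell (Fubini) numbers. -/
def fubini : ℕ → ℕ
  | 0 => 1
  | n + 1 => ∑ k : Fin (n + 1), Nat.choose (n + 1) k * fubini k
  decreasing_by exact k.isLt

/-- Number of partitions of an `n`-set into blocks of size at most 2. -/
def bell2 : ℕ → ℕ
  | 0 => 1
  | 1 => 1
  | n + 2 => bell2 (n + 1) + (n + 1) * bell2 n

/-- The set of egg-pairs of (maximal nests of) a term. -/
def Term.eggs {n : ℕ} : Term n → Finset (Finset (Fin n))
  | .var _ => ∅
  | .mul (.var i) (.var j) => {({i, j} : Finset (Fin n))}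
  | .mul s t => Term.eggs s ∪ Term.eggs t



namespace SpecAux

/-- right comb of elements -/
def rcE {G : Type*} (op : G → G → G) : G → List G → G
  | v, [] => v
  | v, x :: l => op v (rcE op x l)

variable {G : Type*} {op : G → G → G}
  (i1 : ∀ x y z : G, op (op x y) z = op (op x z) y)
  (i2 : ∀ w x y z : G, op w (op x (op y z)) = op w (op (op x y) z))
  (i3 : ∀ w x y z : G, op (op w x) (op y z) = op (op w y) (op x z))

include i1 i2 i3
set_option linter.unusedSectionVars false

theorem foldl_perm : ∀ {l l' : List G}, l.Perm l' → ∀ x, l.foldl op x = l'.foldl op x := by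
  intro l l' h
  induction h with
  | nil => intro x; rfl
  | cons a _ IH => intro x; simp only [List.foldl_cons]; exact IH _
  | swap a b l => intro x; simp only [List.foldl_cons]; rw [i1]
  | trans _ _ IH1 IH2 => intro x; rw [IH1, IH2]

theorem D' (w x y z : G) : op w (op x (op y z)) = op w (op x (op z y)) := by
  rw [i2, i2]; exact congrArg (op w) (i1 x y z)

theorem D2 (w x y z u : G) :
    op w (op x (op y (op z u))) = op w (op x (op z (op y u))) := by
  rw [i2 w x y (op z u), i2 w x z (op y u)]
  exact congrArg (op w) (i3 x y z u)

theorem rcE_perm : ∀ {l l' : List G}, l.Perm l' → ∀ w v, op w (rcE op v l) = op w (rcE op v l') := by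
  intro l l' h
  induction h with
  | nil => intro w v; rfl
  | cons x p IH =>
      intro w v
      show op w (op v (rcE op x _)) = op w (op v (rcE op x _))
      exact congrArg (op w) (IH v x)
  | swap y x l =>
      intro w v
      match l with
      | [] => exact D' i1 i2 i3 w v x y
      | c :: l' => exact D2 i1 i2 i3 w v x y (rcE op c l')
  | trans _ _ IH1 IH2 => intro w v; rw [IH1, IH2]

theorem rcongr {A B : G} (hAB : ∀ w, op w A = op w B) :
    ∀ (L : List G) (w : G), op w (L.foldr op A) = op w (L.foldr op B) := by
  intro L
  induction L with
  | nil => exact hAB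
  | cons x L IH => intro w; exact congrArg (op w) (IH x)

theorem flatten_left (h : Fin n → G) :
    ∀ (t : Term n) (w c : G),
      op w (op (t.eval op h) c) = op w ((t.leaves.map h).foldr op c) := by
  intro t
  induction t with
  | var i => intro w c; rfl
  | mul s u IHs IHu =>
      intro w c
      show op w (op (op (s.eval op h) (u.eval op h)) c) = _
      rw [← i2 w _ _ c, IHs w (op (u.eval op h) c),
        rcongr i1 i2 i3 (fun w' => IHu w' c)]
      simp [Term.leaves, List.foldr_append]

theorem foldr_rcE : ∀ (l : List G) (v x : G) (m : List G),
    (v :: l).foldr op (rcE op x m) = rcE op v (l ++ x :: m) := by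
  intro l
  induction l with
  | nil => intro v x m; rfl
  | cons a l IH => intro v x m; show op v _ = op v _; rw [IH]; rfl

theorem leaves_cons : ∀ t : Term n, ∃ l, t.leaves = t.leftVar :: l := by
  intro t
  induction t with
  | var i => exact ⟨[], rfl⟩
  | mul s u IHs _ =>
      obtain ⟨l, hl⟩ := IHs
      exact ⟨l ++ u.leaves, by simp [Term.leaves, Term.leftVar, hl]⟩

theorem rflatten (h : Fin n → G) :
    ∀ (t : Term n) {v : Fin n} {l : List (Fin n)}, t.leaves = v :: l →
      ∀ w, op w (t.eval op h) = op w (rcE op (h v) (l.map h)) := by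
  intro t
  induction t with
  | var i =>
      intro v l hl w
      simp only [Term.leaves] at hl
      cases hl; rfl
  | mul s u IHs IHu =>
      intro v l hl w
      obtain ⟨ls, hls⟩ := leaves_cons i1 i2 i3 s
      obtain ⟨lu, hlu⟩ := leaves_cons i1 i2 i3 u
      set vu := u.leftVar with hvu
      have hl2 : (v : Fin n) :: l = s.leftVar :: (ls ++ u.leaves) := by
        rw [← hl]; simp [Term.leaves, hls]
      injection hl2 with h1 h2
      subst h1; subst h2
      calc op w ((Term.mul s u).eval op h)
          = op w (op (s.eval op h) (u.eval op h)) := rfl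
        _ = op w ((s.leaves.map h).foldr op (u.eval op h)) := flatten_left i1 i2 i3 h s w _
        _ = op w ((s.leaves.map h).foldr op (rcE op (h vu) (lu.map h))) :=
              rcongr i1 i2 i3 (fun w' => IHu hlu w') _ w
        _ = op w ((h s.leftVar :: ls.map h).foldr op (rcE op (h vu) (lu.map h))) := by
              rw [hls]; rfl
        _ = op w (rcE op (h s.leftVar) (ls.map h ++ h vu :: lu.map h)) := by
              rw [foldr_rcE i1 i2 i3]
        _ = op w (rcE op (h s.leftVar) ((ls ++ u.leaves).map h)) := by
              rw [hlu]; simp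

theorem eval_foldl (h : Fin n → G) :
    ∀ (l : List (Fin n)) (t0 : Term n),
      (l.foldl (fun s j => Term.mul s (Term.var j)) t0).eval op h
        = (l.map h).foldl op (t0.eval op h) := by
  intro l
  induction l with
  | nil => intro t0; rfl
  | cons j l IH => intro t0; simp only [List.foldl_cons, List.map_cons]; rw [IH]; rfl

theorem eval_lBr (h : Fin n → G) (a : Fin n) (l : List (Fin n)) :
    (lBr a l).eval op h = (l.map h).foldl op (h a) :=
  eval_foldl i1 i2 i3 h l (Term.var a)

theorem eval_rmBr (h : Fin n → G) :
    ∀ (l : List (Fin n)) (v : Fin n), (rmBr v l).eval op h = rcE op (h v) (l.map h) := by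
  intro l
  induction l with
  | nil => intro v; rfl
  | cons j l IH => intro v; show op (h v) _ = op (h v) _; rw [IH]

theorem leaves_rmBr : ∀ (l : List (Fin n)) (v : Fin n), (rmBr v l).leaves = v :: l := by
  intro l
  induction l with
  | nil => intro v; rfl
  | cons j l IH => intro v; show v :: (rmBr j l).leaves = _; rw [IH]

theorem evalNF (h : Fin n → G) (a bm : Fin n) (bs cs : List (Fin n)) :
    (Term.mul (lBr a bs) (rmBr bm cs)).eval op h
      = op ((bs.map h).foldl op (h a)) (rcE op (h bm) (cs.map h)) := by
  show op ((lBr a bs).eval op h) ((rmBr bm cs).eval op h) = _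
  rw [eval_lBr i1 i2 i3, eval_rmBr i1 i2 i3]

theorem swapLR (A x y : G) (C : List G) :
    op (op A x) (rcE op y C) = op (op A y) (rcE op x C) := by
  match C with
  | [] => exact i1 A x y
  | c :: C' => exact i3 A x y (rcE op c C')

theorem PL : ∀ (L L' : List G) (x y : G), (L ++ [x]).Perm (L' ++ [y]) →
    ∀ (A : G) (C : List G),
      op (L.foldl op A) (rcE op x C) = op (L'.foldl op A) (rcE op y C) := by
  intro L L' x y hp A C
  have hy : y ∈ L ++ [x] := hp.symm.subset (by simp)
  obtain ⟨P, Q, hPQ⟩ := List.append_of_mem hy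
  rcases Q.eq_nil_or_concat with hQ | ⟨Q', b, hQ⟩
  · subst hQ
    have hlen : L.length = P.length := by
      have := congrArg List.length hPQ; simp at this; omega
    obtain ⟨hL, hxy⟩ := List.append_inj hPQ hlen
    obtain rfl : x = y := by simpa using hxy
    subst hL
    have : L.Perm L' := by
      have h1 : (x :: L).Perm (x :: L') :=
        ((List.perm_append_singleton x L).symm.trans hp).trans
          (List.perm_append_singleton x L')
      exact h1.cons_inv
    rw [foldl_perm i1 i2 i3 this]
  · subst hQ
    have h2 : L ++ [x] = (P ++ y :: Q') ++ [b] := by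
      rw [hPQ]; simp
    have hlen : L.length = (P ++ y :: Q').length := by
      have := congrArg List.length h2; simp at this; simp; omega
    obtain ⟨hL, hxb⟩ := List.append_inj h2 hlen
    obtain rfl : x = b := by simpa using hxb
    subst hL
    have hperm1 : (P ++ y :: Q').Perm ((P ++ Q') ++ [y]) :=
      List.perm_middle.trans (List.perm_append_singleton y (P ++ Q')).symm
    have hperm2 : L'.Perm ((P ++ Q') ++ [x]) := by
      have h1 : (y :: L').Perm (y :: ((P ++ Q') ++ [x])) := by
        refine ((List.perm_append_singleton y L').symm.trans hp.symm).trans ?_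
        have : (P ++ y :: Q') ++ [x] = P ++ y :: (Q' ++ [x]) := by simp
        rw [this]
        refine List.perm_middle.trans ?_
        simp
      exact h1.cons_inv
    rw [foldl_perm i1 i2 i3 hperm1, foldl_perm i1 i2 i3 hperm2,
      List.foldl_concat, List.foldl_concat]
    exact swapLR i1 i2 i3 _ y x C

theorem sort_lemma (a bm : Fin n) (bs cs : List (Fin n)) (hnd : (bs ++ bm :: cs).Nodup) :
    ∃ bs' bm' cs', bs'.Pairwise (· < ·) ∧ cs'.Pairwise (· < ·) ∧ (∀ b ∈ bs', b < bm') ∧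
      (bs' ++ [bm']).Perm (bs ++ [bm]) ∧ cs'.Perm cs ∧
      ∀ h : Fin n → G, (Term.mul (lBr a bs) (rmBr bm cs)).eval op h
        = (Term.mul (lBr a bs') (rmBr bm' cs')).eval op h := by
  classical
  have hsub1 : (bs ++ [bm]).Sublist (bs ++ bm :: cs) :=
    (List.cons_sublist_cons.mpr (List.nil_sublist cs)).append_left bs
  have hnd1 : (bs ++ [bm]).Nodup := hnd.sublist hsub1
  have hndcs : cs.Nodup := hnd.sublist ((List.sublist_cons_self bm cs).trans
    (List.sublist_append_right bs _))
  set L := (bs ++ [bm]).insertionSort (· ≤ ·) with hL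
  have hperm : L.Perm (bs ++ [bm]) := List.perm_insertionSort _ _
  have hndL : L.Nodup := (hperm.nodup_iff).mpr hnd1
  have hsortL : L.Pairwise (· ≤ ·) := List.pairwise_insertionSort _ _
  have hltL : L.Pairwise (· < ·) :=
    (List.Pairwise.and hsortL hndL).imp (fun hp => lt_of_le_of_ne hp.1 hp.2)
  have hLne : L ≠ [] := by
    intro h0
    have := hperm.length_eq
    rw [h0] at this
    simp at this
  refine ⟨L.dropLast, L.getLast hLne, cs.insertionSort (· ≤ ·), ?_, ?_, ?_, ?_, ?_, ?_⟩
  · have := hltL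
    rw [← List.dropLast_append_getLast hLne] at this
    exact (List.pairwise_append.mp this).1
  · have hndcs' : (cs.insertionSort (· ≤ ·)).Nodup :=
      ((List.perm_insertionSort _ _).nodup_iff).mpr hndcs
    exact (List.Pairwise.and (List.pairwise_insertionSort _ _) hndcs').imp
      (fun hp => lt_of_le_of_ne hp.1 hp.2)
  · intro b hb
    have := hltL
    rw [← List.dropLast_append_getLast hLne] at this
    exact (List.pairwise_append.mp this).2.2 b hb _ (List.mem_singleton_self _)
  · rw [List.dropLast_append_getLast hLne]; exact hperm
  · exact List.perm_insertionSort _ _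
  · intro h
    rw [evalNF i1 i2 i3, evalNF i1 i2 i3]
    have hp1 : ((bs.map h) ++ [h bm]).Perm ((L.dropLast.map h) ++ [h (L.getLast hLne)]) := by
      have := (hperm.symm.map h)
      rw [← List.dropLast_append_getLast hLne] at this
      simpa using this
    rw [PL i1 i2 i3 _ _ _ _ hp1]
    exact rcE_perm i1 i2 i3 ((List.perm_insertionSort (· ≤ ·) cs).symm.map h) _ _

theorem step (a bm v : Fin n) (bs cs lu : List (Fin n)) (u : Term n) (hlu : u.leaves = v :: lu)
    (h : Fin n → G) :
    op ((Term.mul (lBr a bs) (rmBr bm cs)).eval op h) (u.eval op h)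
      = (Term.mul (lBr a (bs ++ [v])) (rmBr bm (cs ++ lu))).eval op h := by
  rw [rflatten i1 i2 i3 h u hlu]
  rw [evalNF i1 i2 i3, evalNF i1 i2 i3]
  cases lu with
  | nil =>
      simp only [List.append_nil, List.map_append, List.map_cons, List.map_nil,
        List.foldl_concat, rcE]
      exact i1 _ _ _
  | cons c lu' =>
      simp only [List.map_append, List.map_cons, List.map_nil, List.foldl_concat]
      show op (op _ _) (op (h v) (rcE op (h c) (List.map h lu'))) = _
      rw [i3]
      have h1 : op (op ((bs.map h).foldl op (h a)) (h v))
          (op (rcE op (h bm) (List.map h cs)) (rcE op (h c) (List.map h lu')))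
          = op (op ((bs.map h).foldl op (h a)) (h v))
            (((rmBr bm cs).leaves.map h).foldr op (rcE op (h c) (List.map h lu'))) := by
        rw [← eval_rmBr i1 i2 i3 h cs bm]
        exact flatten_left i1 i2 i3 h (rmBr bm cs) _ _
      rw [h1, leaves_rmBr i1 i2 i3]
      simp only [List.map_cons]
      rw [foldr_rcE i1 i2 i3]

theorem ML : ∀ (s u : Term n), ((Term.mul s u).leaves).Nodup →
    ∃ a bm bs cs w rest, bs.Pairwise (· < ·) ∧ cs.Pairwise (· < ·) ∧ (∀ b ∈ bs, b < bm) ∧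
      (Term.mul s u).leaves = a :: w :: rest ∧ w ∈ bs ++ [bm] ∧
      (a :: (bs ++ bm :: cs)).Perm (Term.mul s u).leaves ∧
      ∀ h : Fin n → G, (Term.mul s u).eval op h
        = (Term.mul (lBr a bs) (rmBr bm cs)).eval op h := by
  intro s
  induction s with
  | var a =>
      intro u hnd
      obtain ⟨lu, hlu⟩ := leaves_cons i1 i2 i3 u
      set v := u.leftVar with hv
      have hleaves : (Term.mul (Term.var a) u).leaves = a :: v :: lu := by
        simp [Term.leaves, hlu]
      have hndu : ([] ++ v :: lu : List (Fin n)).Nodup := by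
        rw [hleaves] at hnd
        simpa using hnd.of_cons
      obtain ⟨bs', bm', cs', hs1, hs2, hs3, hp1, hp2, heq⟩ :=
        sort_lemma i1 i2 i3 a v ([] : List (Fin n)) lu hndu
      refine ⟨a, bm', bs', cs', v, lu, hs1, hs2, hs3, hleaves, ?_, ?_, ?_⟩
      · exact hp1.symm.subset (by simp)
      · rw [hleaves]
        refine List.Perm.cons a ?_
        have : (bs' ++ bm' :: cs') = (bs' ++ [bm']) ++ cs' := by simp
        rw [this]
        simpa using hp1.append hp2
      · intro h
        have e1 : (Term.mul (Term.var a) u).eval op h = op (h a) (u.eval op h) := rfl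
        rw [e1, rflatten i1 i2 i3 h u hlu (h a), ← heq h, evalNF i1 i2 i3]
        rfl
  | mul s1 s2 IH1 _ =>
      intro u hnd
      have hleavesT : (Term.mul (Term.mul s1 s2) u).leaves
          = (Term.mul s1 s2).leaves ++ u.leaves := rfl
      have hnds : (Term.mul s1 s2).leaves.Nodup := by
        rw [hleavesT] at hnd
        exact hnd.of_append_left
      obtain ⟨a, bm, bs, cs, w, rest, hbs, hcs, hblt, hleaf, hw, hperm, heval⟩ := IH1 s2 hnds
      obtain ⟨lu, hlu⟩ := leaves_cons i1 i2 i3 u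
      set v := u.leftVar with hv
      -- nodup of the new parameter list
      have hpermX : (((bs ++ [v]) ++ bm :: (cs ++ lu))).Perm
          ((bs ++ bm :: cs) ++ (v :: lu)) := by
        refine List.perm_iff_count.mpr fun x => ?_
        simp only [List.count_append, List.count_cons, List.count_nil]
        ring
      have hpermT : (a :: ((bs ++ [v]) ++ bm :: (cs ++ lu))).Perm
          ((Term.mul (Term.mul s1 s2) u).leaves) := by
        refine List.Perm.trans (List.Perm.cons a hpermX) ?_
        rw [hleavesT, hlu]
        exact hperm.append (List.Perm.refl (v :: lu))
      have hnd2 : ((bs ++ [v]) ++ bm :: (cs ++ lu)).Nodup := by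
        have := hpermT.symm.nodup_iff.mp hnd
        exact this.of_cons
      obtain ⟨bs', bm', cs', hs1, hs2, hs3, hp1, hp2, heq⟩ :=
        sort_lemma i1 i2 i3 a bm (bs ++ [v]) (cs ++ lu) hnd2
      refine ⟨a, bm', bs', cs', w, rest ++ u.leaves, hs1, hs2, hs3, ?_, ?_, ?_, ?_⟩
      · rw [hleavesT, hleaf]; simp
      · have hw2 : w ∈ (bs ++ [v]) ++ [bm] := by
          rcases List.mem_append.mp hw with h1 | h1
          · exact List.mem_append.mpr (Or.inl (List.mem_append.mpr (Or.inl h1)))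
          · exact List.mem_append.mpr (Or.inr h1)
        exact hp1.symm.subset hw2
      · refine List.Perm.trans ?_ hpermT
        refine List.Perm.cons a ?_
        have e1 : (bs' ++ bm' :: cs') = (bs' ++ [bm']) ++ cs' := by simp
        have e2 : ((bs ++ [v]) ++ bm :: (cs ++ lu)) = ((bs ++ [v]) ++ [bm]) ++ (cs ++ lu) := by
          simp
        rw [e1, e2]
        exact hp1.append hp2
      · intro h
        have e0 : (Term.mul (Term.mul s1 s2) u).eval op h
            = op ((Term.mul s1 s2).eval op h) (u.eval op h) := rfl
        rw [e0, heval h, step i1 i2 i3 a bm v bs cs lu u hlu h, heq h]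

def stdTerm {n : ℕ} (a : Fin n) (B : Finset (Fin n)) : Term n :=
  Term.mul (lBr a ((B.erase (B.max.getD a)).sort (· ≤ ·)))
    (rmBr (B.max.getD a) ((Finset.univ \ insert a B).sort (· ≤ ·)))

omit i1 i2 i3 in
theorem sorted_toFinset_sort {m : ℕ} (l : List (Fin m)) (hl : l.Pairwise (· < ·)) :
    (l.toFinset.sort (· ≤ ·)) = l := by
  haveI : IsAntisymm (Fin m) (· < ·) := ⟨fun a b h1 h2 => absurd h2 (asymm h1)⟩
  have hnd : l.Nodup := hl.nodup
  refine List.Perm.eq_of_pairwise' (r := (· < ·)) (Finset.sortedLT_sort _).pairwise hl ?_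
  exact (Finset.sort_perm_toList _ _).trans (List.toFinset_toList hnd)

omit i1 i2 i3 in
theorem std_eq {m : ℕ} (a bm : Fin m) (bs cs : List (Fin m))
    (hbs : bs.Pairwise (· < ·)) (hcs : cs.Pairwise (· < ·)) (hblt : ∀ b ∈ bs, b < bm)
    (hperm : (a :: (bs ++ bm :: cs)).Perm (List.finRange m)) :
    stdTerm a ((bs ++ [bm]).toFinset) = Term.mul (lBr a bs) (rmBr bm cs)
      ∧ a ∉ (bs ++ [bm]).toFinset ∧ ((bs ++ [bm]).toFinset).Nonempty := by
  classical
  set B := (bs ++ [bm]).toFinset with hB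
  have hmemB : ∀ x, x ∈ B ↔ (x ∈ bs ∨ x = bm) := by intro x; simp [hB, or_comm]
  have hbmB : bm ∈ B := (hmemB bm).mpr (Or.inr rfl)
  have hne : B.Nonempty := ⟨bm, hbmB⟩
  have hnodup : (a :: (bs ++ bm :: cs)).Nodup := hperm.nodup_iff.mpr (List.nodup_finRange m)
  have hnd2 : (bs ++ bm :: cs).Nodup := hnodup.of_cons
  have hanotin : a ∉ bs ++ bm :: cs := (List.nodup_cons.mp hnodup).1
  have hdisj : List.Disjoint bs (bm :: cs) := List.disjoint_of_nodup_append hnd2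
  have hbmcs : bm ∉ cs := (List.nodup_cons.mp (hnd2.of_append_right)).1
  have hle : ∀ x ∈ B, x ≤ bm := by
    intro x hx
    rcases (hmemB x).mp hx with h | rfl
    · exact le_of_lt (hblt x h)
    · exact le_refl _
  have hmax' : B.max' hne = bm :=
    le_antisymm (Finset.max'_le _ _ _ hle) (Finset.le_max' _ _ hbmB)
  have hmax : B.max.getD a = bm := by
    rw [← Finset.coe_max' hne, hmax']; rfl
  have herase : B.erase bm = bs.toFinset := by
    ext x
    constructor
    · intro hx
      obtain ⟨hxne, hxB⟩ := Finset.mem_erase.mp hx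
      rcases (hmemB x).mp hxB with h | rfl
      · exact List.mem_toFinset.mpr h
      · exact absurd rfl hxne
    · intro hx
      have hxbs := List.mem_toFinset.mp hx
      exact Finset.mem_erase.mpr ⟨ne_of_lt (hblt x hxbs), (hmemB x).mpr (Or.inl hxbs)⟩
  have hcompl : Finset.univ \ insert a B = cs.toFinset := by
    ext x
    simp only [Finset.mem_sdiff, Finset.mem_univ, true_and, Finset.mem_insert,
      List.mem_toFinset, not_or]
    constructor
    · rintro ⟨hxa, hxB⟩
      have hxfull : x ∈ a :: (bs ++ bm :: cs) :=
        hperm.symm.subset (by simp [List.mem_finRange])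
      rcases List.mem_cons.mp hxfull with rfl | hx2
      · exact absurd rfl hxa
      · rcases List.mem_append.mp hx2 with h | h
        · exact absurd ((hmemB x).mpr (Or.inl h)) hxB
        · rcases List.mem_cons.mp h with rfl | h
          · exact absurd ((hmemB x).mpr (Or.inr rfl)) hxB
          · exact h
    · intro hx
      refine ⟨?_, ?_⟩
      · rintro rfl
        exact hanotin (List.mem_append.mpr (Or.inr (List.mem_cons.mpr (Or.inr hx))))
      · intro hxB
        rcases (hmemB x).mp hxB with h | rfl
        · exact hdisj h (List.mem_cons.mpr (Or.inr hx))
        · exact hbmcs hx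
  refine ⟨?_, ?_, hne⟩
  · unfold stdTerm
    rw [hmax, herase, hcompl, sorted_toFinset_sort bs hbs, sorted_toFinset_sort cs hcs]
  · intro haB
    rcases (hmemB a).mp haB with h | rfl
    · exact hanotin (List.mem_append.mpr (Or.inl h))
    · exact hanotin (List.mem_append.mpr (Or.inr (List.mem_cons.mpr (Or.inl rfl))))

omit i1 i2 i3 in
theorem card_Pf (m : ℕ) :
    ((Finset.univ : Finset (Fin m × Finset (Fin m))).filter
      (fun p => p.1 ∉ p.2 ∧ p.2.Nonempty)).card = m * (2 ^ (m - 1) - 1) := by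
  classical
  set Pf := ((Finset.univ : Finset (Fin m × Finset (Fin m))).filter
      (fun p => p.1 ∉ p.2 ∧ p.2.Nonempty)) with hPf
  rw [Finset.card_eq_sum_card_fiberwise (f := Prod.fst) (t := Finset.univ)
    (fun x _ => Finset.mem_univ _)]
  have hfiber : ∀ a : Fin m, (Pf.filter (fun p => p.1 = a)).card = 2 ^ (m - 1) - 1 := by
    intro a
    have himg : Pf.filter (fun p => p.1 = a)
        = (Finset.univ.filter (fun B : Finset (Fin m) => a ∉ B ∧ B.Nonempty)).image
            (fun B => (a, B)) := by
      ext p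
      simp only [hPf, Finset.mem_filter, Finset.mem_image, Finset.mem_univ, true_and]
      constructor
      · rintro ⟨⟨h1, h2⟩, h3⟩
        exact ⟨p.2, ⟨h3 ▸ h1, h2⟩, by rw [← h3]⟩
      · rintro ⟨B, ⟨h1, h2⟩, rfl⟩
        exact ⟨⟨h1, h2⟩, rfl⟩
    rw [himg, Finset.card_image_of_injective _
      (fun B C h => ((Prod.mk.injEq _ _ _ _).mp h).2)]
    have heq : Finset.univ.filter (fun B : Finset (Fin m) => a ∉ B ∧ B.Nonempty)
        = ((Finset.univ.erase a).powerset).erase ∅ := by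
      ext B
      simp only [Finset.mem_filter, Finset.mem_univ, true_and, Finset.mem_erase,
        Finset.mem_powerset, Finset.subset_erase, Finset.nonempty_iff_ne_empty]
      constructor
      · rintro ⟨h1, h2⟩
        exact ⟨h2, Finset.subset_univ B, h1⟩
      · rintro ⟨h1, _, h3⟩
        exact ⟨h3, h1⟩
    rw [heq, Finset.card_erase_of_mem (Finset.empty_mem_powerset _), Finset.card_powerset,
      Finset.card_erase_of_mem (Finset.mem_univ a), Finset.card_univ, Fintype.card_fin]
  rw [Finset.sum_congr rfl (fun a _ => hfiber a), Finset.sum_const, Finset.card_univ,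
    Fintype.card_fin, smul_eq_mul]

omit i1 i2 i3 in
theorem card_Bf {m : ℕ} (z o : Fin m) (hzo : z ≠ o) :
    (Finset.univ.filter (fun B : Finset (Fin m) => z ∉ B ∧ o ∈ B)).card = 2 ^ (m - 2) := by
  classical
  have himg : Finset.univ.filter (fun B : Finset (Fin m) => z ∉ B ∧ o ∈ B)
      = (((Finset.univ.erase z).erase o).powerset).image (insert o) := by
    ext B
    simp only [Finset.mem_filter, Finset.mem_univ, true_and, Finset.mem_image,
      Finset.mem_powerset]
    constructor
    · rintro ⟨h1, h2⟩
      refine ⟨B.erase o, ?_, Finset.insert_erase h2⟩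
      rw [Finset.subset_erase, Finset.subset_erase]
      exact ⟨⟨Finset.subset_univ _, fun hz => h1 (Finset.mem_of_mem_erase hz)⟩,
        Finset.notMem_erase o B⟩
    · rintro ⟨C, hC, rfl⟩
      rw [Finset.subset_erase] at hC
      obtain ⟨hC1, hoC⟩ := hC
      rw [Finset.subset_erase] at hC1
      refine ⟨?_, Finset.mem_insert_self o C⟩
      intro hz
      rcases Finset.mem_insert.mp hz with h | h
      · exact hzo h
      · exact hC1.2 h
  rw [himg, Finset.card_image_of_injOn, Finset.card_powerset]
  · congr 1
    rw [Finset.card_erase_of_mem, Finset.card_erase_of_mem (Finset.mem_univ z),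
      Finset.card_univ, Fintype.card_fin]
    · omega
    · exact Finset.mem_erase.mpr ⟨hzo.symm, Finset.mem_univ o⟩
  · intro C hC C' hC' hCC'
    simp only [Finset.mem_coe, Finset.mem_powerset, Finset.subset_erase] at hC hC'
    rw [← Finset.erase_insert hC.2, ← Finset.erase_insert hC'.2, hCC']

end SpecAux


/-- For groupoids satisfying `(xy)z ≈ (xz)y`, `w(x(yz)) ≈ w((xy)z)` and
`(wx)(yz) ≈ (wy)(xz)`, every full linear term is equivalent to a standard term
`[x_a, x_{b_1},…,x_{b_{m-1}}] ⟨x_{b_m}, x_{c_1},…,x_{c_{n-m-1}}⟩` with increasing `b`'s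
and `c`'s; hence `s^ac_n ≤ n(2^{n-1} - 1)` and `s_n ≤ 2^{n-2}`. -/
theorem spec_bounds_A058877 {G : Type*} (op : G → G → G)
    (i1 : ∀ x y z : G, op (op x y) z = op (op x z) y)
    (i2 : ∀ w x y z : G, op w (op x (op y z)) = op w (op (op x y) z))
    (i3 : ∀ w x y z : G, op (op w x) (op y z) = op (op w y) (op x z))
    (n : ℕ) (hn : 2 ≤ n) :
    (∀ t : Term n, t.IsLinear →
      ∃ (a bm : Fin n) (bs cs : List (Fin n)),
        bs.Pairwise (· < ·) ∧ cs.Pairwise (· < ·) ∧ (∀ b ∈ bs, b < bm) ∧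
        (a :: (bs ++ bm :: cs)).Perm (List.finRange n) ∧
        ∀ h : Fin n → G, t.eval op h = (Term.mul (lBr a bs) (rmBr bm cs)).eval op h) ∧
    acSpec op n ≤ n * (2 ^ (n - 1) - 1) ∧ assocSpec op n ≤ 2 ^ (n - 2) := by
  classical
  have key : ∀ t : Term n, t.IsLinear →
      ∃ (a bm : Fin n) (bs cs : List (Fin n)) (w : Fin n) (rest : List (Fin n)),
        bs.Pairwise (· < ·) ∧ cs.Pairwise (· < ·) ∧ (∀ b ∈ bs, b < bm) ∧
        t.leaves = a :: w :: rest ∧ w ∈ bs ++ [bm] ∧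
        (a :: (bs ++ bm :: cs)).Perm (List.finRange n) ∧
        ∀ h : Fin n → G, t.eval op h = (Term.mul (lBr a bs) (rmBr bm cs)).eval op h := by
    intro t hlin
    cases t with
    | var i =>
        exfalso
        have := hlin.length_eq
        simp [Term.leaves] at this
        omega
    | mul s u =>
        have hnd : (Term.mul s u).leaves.Nodup := hlin.nodup_iff.mpr (List.nodup_finRange n)
        obtain ⟨a, bm, bs, cs, w, rest, h1, h2, h3, h4, h5, h6, h7⟩ :=
          SpecAux.ML i1 i2 i3 s u hnd
        exact ⟨a, bm, bs, cs, w, rest, h1, h2, h3, h4, h5, h6.trans hlin, h7⟩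
  refine ⟨?_, ?_, ?_⟩
  · intro t hlin
    obtain ⟨a, bm, bs, cs, w, rest, h1, h2, h3, _, _, h6, h7⟩ := key t hlin
    exact ⟨a, bm, bs, cs, h1, h2, h3, h6, h7⟩
  · set Pf := ((Finset.univ : Finset (Fin n × Finset (Fin n))).filter
      (fun p => p.1 ∉ p.2 ∧ p.2.Nonempty)) with hPf
    have hsub : {f : (Fin n → G) → G | ∃ t : Term n, t.IsLinear ∧ f = fun h => t.eval op h}
        ⊆ (fun p : Fin n × Finset (Fin n) =>
            fun h : Fin n → G => (SpecAux.stdTerm p.1 p.2).eval op h) '' ↑Pf := by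
      rintro f ⟨t, hlin, rfl⟩
      obtain ⟨a, bm, bs, cs, w, rest, h1, h2, h3, _, _, h6, h7⟩ := key t hlin
      obtain ⟨hstd, haB, hBne⟩ := SpecAux.std_eq a bm bs cs h1 h2 h3 h6
      refine ⟨(a, (bs ++ [bm]).toFinset), ?_, ?_⟩
      · simp only [hPf, Finset.coe_filter, Finset.mem_univ, true_and, Set.mem_setOf_eq]
        exact ⟨haB, hBne⟩
      · funext h
        show (SpecAux.stdTerm a _).eval op h = t.eval op h
        rw [hstd, ← h7 h]
    show Set.ncard _ ≤ _
    calc Set.ncard {f : (Fin n → G) → G | ∃ t : Term n, t.IsLinear ∧ f = fun h => t.eval op h}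
        ≤ Set.ncard ((fun p : Fin n × Finset (Fin n) =>
            fun h : Fin n → G => (SpecAux.stdTerm p.1 p.2).eval op h) '' ↑Pf) :=
          Set.ncard_le_ncard hsub ((Pf.finite_toSet).image _)
      _ ≤ Set.ncard (↑Pf : Set (Fin n × Finset (Fin n))) :=
          Set.ncard_image_le Pf.finite_toSet
      _ = Pf.card := Set.ncard_coe_finset Pf
      _ = n * (2 ^ (n - 1) - 1) := SpecAux.card_Pf n
  · set z : Fin n := ⟨0, by omega⟩ with hz
    set o : Fin n := ⟨1, by omega⟩ with ho
    have hzo : z ≠ o := by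
      intro h
      have := congrArg Fin.val h
      simp [hz, ho] at this
    set Bf := Finset.univ.filter (fun B : Finset (Fin n) => z ∉ B ∧ o ∈ B) with hBf
    have hsub : {f : (Fin n → G) → G | ∃ t : Term n, t.IsBracketing ∧ f = fun h => t.eval op h}
        ⊆ (fun B : Finset (Fin n) =>
            fun h : Fin n → G => (SpecAux.stdTerm z B).eval op h) '' ↑Bf := by
      rintro f ⟨t, hbr, rfl⟩
      have hlin : t.IsLinear := by rw [Term.IsLinear, hbr]
      obtain ⟨a, bm, bs, cs, w, rest, h1, h2, h3, h4, h5, h6, h7⟩ := key t hlin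
      have hfr : List.finRange n = a :: w :: rest := by rw [← hbr, h4]
      have ha : a = z := by
        have hl0 : (0 : ℕ) < (List.finRange n).length := by
          rw [List.length_finRange]; omega
        have h0 : (List.finRange n)[0]'hl0 = a := by
          simp [hfr]
        rw [List.getElem_finRange] at h0
        exact Fin.ext (by simpa [hz] using (congrArg Fin.val h0).symm)
      have hwo : w = o := by
        have hl1 : (1 : ℕ) < (List.finRange n).length := by
          rw [List.length_finRange]; omega
        have h0 : (List.finRange n)[1]'hl1 = w := by
          simp [hfr]
        rw [List.getElem_finRange] at h0
        exact Fin.ext (by simpa [ho] using (congrArg Fin.val h0).symm)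
      obtain ⟨hstd, haB, hBne⟩ := SpecAux.std_eq a bm bs cs h1 h2 h3 h6
      refine ⟨(bs ++ [bm]).toFinset, ?_, ?_⟩
      · simp only [hBf, Finset.coe_filter, Finset.mem_univ, true_and, Set.mem_setOf_eq]
        exact ⟨ha ▸ haB, List.mem_toFinset.mpr (hwo ▸ h5)⟩
      · funext h
        show (SpecAux.stdTerm z _).eval op h = t.eval op h
        rw [← ha, hstd, ← h7 h]
    show Set.ncard _ ≤ _
    calc Set.ncard {f : (Fin n → G) → G | ∃ t : Term n, t.IsBracketing ∧ f = fun h => t.eval op h}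
        ≤ Set.ncard ((fun B : Finset (Fin n) =>
            fun h : Fin n → G => (SpecAux.stdTerm z B).eval op h) '' ↑Bf) :=
          Set.ncard_le_ncard hsub ((Bf.finite_toSet).image _)
      _ ≤ Set.ncard (↑Bf : Set (Finset (Fin n))) := Set.ncard_image_le Bf.finite_toSet
      _ = Bf.card := Set.ncard_coe_finset Bf
      _ = 2 ^ (n - 2) := SpecAux.card_Bf z o hzo
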